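/- The measure μ with density u ↦ 1/(1+√2-u) on (-∞, 1+√2) is invariant under the octagon Farey map F: the pushforward of μ under F equals μ, i.e. μ(F⁻¹(A)) = μ(A) for every Borel set A ⊆ ℝ. -/

import Mathlib

/-!
On each sector `Σᵢ` with `1 ≤ i ≤ 6` the map `F` is a Möbius map `u ↦ Q - β / (u - α)` sending
the open sector bijectively onto `(-∞, L)`, `L = 1 + √2`; on `Σ₇` it is the translation by
`2 + 2√2`, and `Σ₀` carries no mass. Pulling the density `1 / (L - u)` back along an inverse
branch gives `|1 / (P - v) - 1 / (Q - v)|`, where `P` and `Q` are the images of `L` and `∞` under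
the branch. The seven pairs `{P, Q}` form the chain
`L, 1 + 2√2, 3 + √2, 2 + 2√2, 1 + 3√2, 3 + 2√2, 3 + 3√2, ∞`,
so the pulled-back densities telescope to `1 / (L - v)`.
-/

open MeasureTheory Set

noncomputable section

/-- The linear fractional transformation of `ℝ` induced by a 2×2 real matrix,
with the convention that the value is `0` when the denominator vanishes. -/
def mob (M : Matrix (Fin 2) (Fin 2) ℝ) (u : ℝ) : ℝ :=
  (M 0 0 * u + M 0 1) / (M 1 0 * u + M 1 1)

/-- The matrix `γ = [[-1, 2+2√2],[0,1]]`. -/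
def gam : Matrix (Fin 2) (Fin 2) ℝ := !![-1, 2 + 2 * Real.sqrt 2; 0, 1]

/-- The isometries `ν₁, …, ν₇` of the octagon. -/
def nu : ℕ → Matrix (Fin 2) (Fin 2) ℝ
  | 1 => (Real.sqrt 2)⁻¹ • !![1, 1; 1, -1]
  | 2 => (Real.sqrt 2)⁻¹ • !![1, 1; -1, 1]
  | 3 => !![0, 1; 1, 0]
  | 4 => !![0, 1; -1, 0]
  | 5 => (Real.sqrt 2)⁻¹ • !![-1, 1; 1, 1]
  | 6 => (Real.sqrt 2)⁻¹ • !![-1, 1; -1, -1]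
  | 7 => !![-1, 0; 0, 1]
  | _ => 1

/-- The index `i` of the sector `Σᵢ` (in inverse-slope coordinates) containing `u`:
`Σ₀ = (1+√2, ∞)`, `Σ₁ = (1, 1+√2]`, `Σ₂ = (√2-1, 1]`, `Σ₃ = (0, √2-1]`, `Σ₄ = (1-√2, 0]`,
`Σ₅ = (-1, 1-√2]`, `Σ₆ = (-1-√2, -1]`, `Σ₇ = (-∞, -1-√2]`. -/
def sectorIndex (u : ℝ) : ℕ :=
  if 1 + Real.sqrt 2 < u then 0
  else if 1 < u then 1
  else if Real.sqrt 2 - 1 < u then 2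
  else if 0 < u then 3
  else if 1 - Real.sqrt 2 < u then 4
  else if -1 < u then 5
  else if -(1 + Real.sqrt 2) < u then 6
  else 7

/-- The octagon Farey map in inverse-slope coordinates: `F(u) = (γ·νᵢ)[u]` for `u ∈ Σᵢ`
(`i = 1,…,7`), and `F(u) = u` for `u ∈ Σ₀`. -/
def F (u : ℝ) : ℝ :=
  if sectorIndex u = 0 then u else mob (gam * nu (sectorIndex u)) u

/-- The measure with density `u ↦ 1/(1+√2-u)` on `(-∞, 1+√2)` and `0` elsewhere. -/
def fareyMeasure : Measure ℝ :=
  volume.withDensity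
    ((Set.Iio (1 + Real.sqrt 2)).indicator fun u => ENNReal.ofReal (1 + Real.sqrt 2 - u)⁻¹)

open scoped ENNReal

theorem lintegral_image_mul_comp_of_leftInvOn {s : Set ℝ} {φ φ' f : ℝ → ℝ} (hs : MeasurableSet s)
    (hφ : ∀ v ∈ s, HasDerivWithinAt φ (φ' v) s v) (hfφ : LeftInvOn f φ s) (w g : ℝ → ℝ≥0∞) :
    ∫⁻ u in φ '' s, w u * g (f u) = ∫⁻ v in s, ENNReal.ofReal |φ' v| * w (φ v) * g v := by
  rw [lintegral_image_eq_lintegral_abs_deriv_mul hs hφ hfφ.injOn]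
  refine setLIntegral_congr_fun hs fun v hv => ?_
  rw [hfφ hv, mul_assoc]

section Hyperbolic

variable {L α β Q y P : ℝ}

theorem image_hyperbolic_Iio (hLQ : L < Q) (hy : (y - α) * (Q - L) = β) (hβ : β ≠ 0) :
    (fun v => α + β / (Q - v)) '' Iio L = uIoo α y := by
  have hc : 0 < Q - L := sub_pos.2 hLQ
  have hyα : y - α ≠ 0 := fun h => hβ (by rw [← hy, h, zero_mul])
  ext u
  constructor
  · rintro ⟨v, hv : v < L, rfl⟩
    have hr : 0 < (Q - L) / (Q - v) := div_pos hc (by linarith)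
    have hr1 : (Q - L) / (Q - v) < 1 := (div_lt_one (by linarith)).2 (by linarith)
    have hu : α + β / (Q - v) = α + (y - α) * ((Q - L) / (Q - v)) := by rw [← hy]; ring
    show α + β / (Q - v) ∈ _
    rw [hu]
    rcases lt_or_gt_of_ne hyα with h | h
    · exact mem_uIoo_of_gt (by nlinarith) (by nlinarith)
    · exact mem_uIoo_of_lt (by nlinarith) (by nlinarith)
  · intro hu
    have huα : u - α ≠ 0 := sub_ne_zero.2 (ne_of_mem_of_not_mem hu left_notMem_uIoo)
    refine ⟨Q - β / (u - α), ?_, by simp only [sub_sub_cancel, div_div_cancel₀ hβ, add_sub_cancel]⟩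
    have hr : 1 < (y - α) / (u - α) := by
      rcases lt_or_gt_of_ne hyα with h | h
      · rw [uIoo_of_gt (by linarith)] at hu
        exact (one_lt_div_of_neg (by linarith [hu.2])).2 (by linarith [hu.1])
      · rw [uIoo_of_lt (by linarith)] at hu
        exact (one_lt_div (by linarith [hu.1])).2 (by linarith [hu.2])
    rw [mem_Iio, ← hy, mul_comm, mul_div_assoc]
    nlinarith

theorem sub_hyperbolic {v : ℝ} (hP : (L - α) * (Q - P) = β) (hQv : Q - v ≠ 0) :
    L - (α + β / (Q - v)) = (L - α) * (P - v) / (Q - v) := by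
  rw [← hP]; field_simp; ring

theorem hyperbolic_deriv_mul_inv_sub {v : ℝ} (hP : (L - α) * (Q - P) = β) (hQv : Q - v ≠ 0)
    (hLα : L - α ≠ 0) (hPv : P - v ≠ 0) :
    β / (Q - v) ^ 2 * (L - (α + β / (Q - v)))⁻¹ = (P - v)⁻¹ - (Q - v)⁻¹ := by
  rw [sub_hyperbolic hP hQv, ← hP]; field_simp; ring

theorem setLIntegral_hyperbolic (hαL : α < L) (hLQ : L < Q) (hyL : y ≤ L)
    (hy : (y - α) * (Q - L) = β) (hP : (L - α) * (Q - P) = β) (hβ : β ≠ 0) {f : ℝ → ℝ}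
    (hf : ∀ u ∈ uIoo α y, f u = Q - β / (u - α)) (g : ℝ → ℝ≥0∞) :
    ∫⁻ u in uIoo α y, ENNReal.ofReal (L - u)⁻¹ * g (f u)
      = ∫⁻ v in Iio L, ENNReal.ofReal |(P - v)⁻¹ - (Q - v)⁻¹| * g v := by
  have hQv : ∀ v ∈ Iio L, Q - v ≠ 0 := fun v hv => (sub_pos.2 (hv.trans hLQ)).ne'
  have hmaps : ∀ v ∈ Iio L, α + β / (Q - v) ∈ uIoo α y := fun v hv =>
    image_hyperbolic_Iio hLQ hy hβ ▸ mem_image_of_mem _ hv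
  have hderiv : ∀ v ∈ Iio L,
      HasDerivWithinAt (fun v => α + β / (Q - v)) (β / (Q - v) ^ 2) (Iio L) v := by
    intro v hv
    have hsub : HasDerivAt (fun w => Q - w) (-1) v := by
      simpa using (hasDerivAt_id v).const_sub Q
    exact (((hasDerivAt_const v β).div hsub (hQv v hv)).const_add α).hasDerivWithinAt.congr_deriv
      (by ring)
  have hinv : LeftInvOn f (fun v => α + β / (Q - v)) (Iio L) := fun v hv => by
    rw [hf _ (hmaps v hv), add_sub_cancel_left, div_div_cancel₀ hβ, sub_sub_cancel]
  rw [← image_hyperbolic_Iio hLQ hy hβ,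
    lintegral_image_mul_comp_of_leftInvOn measurableSet_Iio hderiv hinv]
  refine setLIntegral_congr_fun measurableSet_Iio fun v hv => ?_
  have hlt : α + β / (Q - v) < L := (hmaps v hv).2.trans_le (max_le hαL.le hyL)
  have hPv : P - v ≠ 0 := by
    rintro h
    have := sub_hyperbolic (v := v) hP (hQv v hv)
    rw [h, mul_zero, zero_div] at this
    linarith
  rw [← ENNReal.ofReal_mul (abs_nonneg _), ← abs_of_nonneg (inv_nonneg.2 (sub_nonneg.2 hlt.le)),
    ← abs_mul, hyperbolic_deriv_mul_inv_sub hP (hQv v hv) (sub_pos.2 hαL).ne' hPv]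

end Hyperbolic

theorem mob_eq_sub_div {M : Matrix (Fin 2) (Fin 2) ℝ} {α β Q u : ℝ} (hc : M 1 0 ≠ 0)
    (hQ : M 0 0 = Q * M 1 0) (hα : M 1 1 = -α * M 1 0) (hβ : M.det = β * M 1 0 ^ 2)
    (hu : u - α ≠ 0) : mob M u = Q - β / (u - α) := by
  rw [Matrix.det_fin_two, hQ, hα] at hβ
  have hb : M 0 1 = -(Q * α + β) * M 1 0 := by
    apply mul_right_cancel₀ hc; linear_combination -hβ
  rw [mob, hQ, hα, hb, show M 1 0 * u + -α * M 1 0 = M 1 0 * (u - α) by ring,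
    show Q * M 1 0 * u + -(Q * α + β) * M 1 0 = M 1 0 * (Q * (u - α) - β) by ring,
    mul_div_mul_left _ _ hc, sub_div, mul_div_cancel_right₀ _ hu]

theorem measurable_mob (M : Matrix (Fin 2) (Fin 2) ℝ) : Measurable (mob M) := by
  unfold mob; fun_prop

def fareyDensity (u : ℝ) : ℝ≥0∞ := ENNReal.ofReal (1 + √2 - u)⁻¹

theorem fareyDensity_eq_zero {u : ℝ} (hu : 1 + √2 ≤ u) : fareyDensity u = 0 :=
  ENNReal.ofReal_of_nonpos (inv_nonpos.2 (sub_nonpos.2 hu))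

theorem measurable_fareyDensity : Measurable fareyDensity := by
  unfold fareyDensity; fun_prop

theorem fareyMeasure_eq_withDensity : fareyMeasure = volume.withDensity fareyDensity :=
  congrArg _ (funext fun _ => indicator_apply_eq_self.2 fun hu =>
    fareyDensity_eq_zero (not_lt.1 hu))

/-- The sector `Σᵢ`. -/
def sector : ℕ → Set ℝ
  | 0 => Ioi (1 + √2)
  | 1 => Ioc 1 (1 + √2)
  | 2 => Ioc (√2 - 1) 1
  | 3 => Ioc 0 (√2 - 1)
  | 4 => Ioc (1 - √2) 0
  | 5 => Ioc (-1) (1 - √2)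
  | 6 => Ioc (-(1 + √2)) (-1)
  | 7 => Iic (-(1 + √2))
  | _ => ∅

theorem preimage_sectorIndex_singleton (i : ℕ) : sectorIndex ⁻¹' {i} = sector i := by
  have h1 := Real.one_lt_sqrt_two
  have h2 := Real.sqrt_two_lt_three_halves
  ext u
  simp only [mem_preimage, mem_singleton_iff, sectorIndex]
  rcases i with _ | _ | _ | _ | _ | _ | _ | _ | i <;>
    simp only [sector, mem_Ioi, mem_Ioc, mem_Iic, mem_empty_iff_false] <;>
    split_ifs <;> grind

theorem measurableSet_sector (i : ℕ) : MeasurableSet (sector i) := by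
  rcases i with _ | _ | _ | _ | _ | _ | _ | _ | i <;> simp [sector]

theorem sectorIndex_lt (u : ℝ) : sectorIndex u < 8 := by
  unfold sectorIndex; split_ifs <;> norm_num

theorem measurable_F : Measurable F := by
  have hsector : Measurable sectorIndex := measurable_to_countable' fun i => by
    rw [preimage_sectorIndex_singleton]; exact measurableSet_sector i
  have hbranch : Measurable fun p : ℝ × ℕ => if p.2 = 0 then p.1 else mob (gam * nu p.2) p.1 :=
    measurable_from_prod_countable_left fun i => by
      by_cases hi : i = 0 <;> simp [hi, measurable_id', measurable_mob]
  exact hbranch.comp (measurable_id.prodMk hsector)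

theorem lintegral_eq_sum_sector (h : ℝ → ℝ≥0∞) :
    ∫⁻ u, h u = ∑ i ∈ Finset.range 8, ∫⁻ u in sector i, h u := by
  simp_rw [← preimage_sectorIndex_singleton]
  rw [← lintegral_biUnion_finset ((pairwise_disjoint_fiber sectorIndex).set_pairwise _)
    (fun i _ => preimage_sectorIndex_singleton i ▸ measurableSet_sector i),
    eq_univ_of_forall fun u => mem_iUnion₂.2 ⟨_, Finset.mem_range.2 (sectorIndex_lt u), rfl⟩,
    Measure.restrict_univ]

theorem F_eq_mob_of_mem_sector {i : ℕ} {u : ℝ} (hu : u ∈ sector i) (hi : i ≠ 0) :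
    F u = mob (gam * nu i) u := by
  rw [← preimage_sectorIndex_singleton, mem_preimage, mem_singleton_iff] at hu
  rw [F, hu, if_neg hi]

/-- The density on `(-∞, 1 + √2)` of the image under `F` of `fareyMeasure` restricted to
`sector i`. -/
def branchDensity : ℕ → ℝ → ℝ
  | 1, v => |(1 + √2 - v)⁻¹ - (1 + 2 * √2 - v)⁻¹|
  | 2, v => |(3 + 3 * √2 - v)⁻¹ - (3 + 2 * √2 - v)⁻¹|
  | 3, v => |(3 + √2 - v)⁻¹ - (2 + 2 * √2 - v)⁻¹|
  | 4, v => |(1 + 3 * √2 - v)⁻¹ - (2 + 2 * √2 - v)⁻¹|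
  | 5, v => |(1 + 3 * √2 - v)⁻¹ - (3 + 2 * √2 - v)⁻¹|
  | 6, v => |(3 + √2 - v)⁻¹ - (1 + 2 * √2 - v)⁻¹|
  | 7, v => (3 + 3 * √2 - v)⁻¹
  | _, _ => 0

theorem setLIntegral_sector_one (g : ℝ → ℝ≥0∞) :
    ∫⁻ u in sector 1, fareyDensity u * g (F u)
      = ∫⁻ v in Iio (1 + √2), ENNReal.ofReal (branchDensity 1 v) * g v := by
  have hs : √2 ^ 2 = 2 := Real.sq_sqrt zero_le_two
  have h1 := Real.one_lt_sqrt_two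
  have hsector : uIoo 1 (1 + √2) = Ioo 1 (1 + √2) := uIoo_of_lt (by linarith)
  rw [sector, ← setLIntegral_congr Ioo_ae_eq_Ioc, ← hsector]
  refine setLIntegral_hyperbolic (β := 2) (Q := 1 + 2 * √2) (by linarith) (by linarith) le_rfl
    (by linear_combination hs) (by linear_combination hs) two_ne_zero (fun u hu => ?_) g
  rw [hsector] at hu
  rw [F_eq_mob_of_mem_sector (Ioo_subset_Ioc_self hu) one_ne_zero]
  refine mob_eq_sub_div ?_ ?_ ?_ ?_ (sub_ne_zero.2 hu.1.ne') <;>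
    simp [gam, nu, Matrix.mul_apply, Fin.sum_univ_two, Matrix.det_fin_two] <;>
    ring_nf
  simp [hs]

theorem setLIntegral_sector_two (g : ℝ → ℝ≥0∞) :
    ∫⁻ u in sector 2, fareyDensity u * g (F u)
      = ∫⁻ v in Iio (1 + √2), ENNReal.ofReal (branchDensity 2 v) * g v := by
  have hs : √2 ^ 2 = 2 := Real.sq_sqrt zero_le_two
  have h1 := Real.one_lt_sqrt_two
  have h2 := Real.sqrt_two_lt_three_halves
  have hsector : uIoo 1 (√2 - 1) = Ioo (√2 - 1) 1 := uIoo_of_gt (by linarith)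
  rw [sector, ← setLIntegral_congr Ioo_ae_eq_Ioc, ← hsector]
  refine setLIntegral_hyperbolic (β := -2) (Q := 3 + 2 * √2) (by linarith) (by linarith)
    (by linarith) (by linear_combination hs) (by linear_combination -hs) (by norm_num)
    (fun u hu => ?_) g
  rw [hsector] at hu
  rw [F_eq_mob_of_mem_sector (Ioo_subset_Ioc_self hu) two_ne_zero]
  refine mob_eq_sub_div ?_ ?_ ?_ ?_ (sub_ne_zero.2 hu.2.ne) <;>
    simp [gam, nu, Matrix.mul_apply, Fin.sum_univ_two, Matrix.det_fin_two] <;>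
    ring_nf
  simp [hs]

theorem setLIntegral_sector_three (g : ℝ → ℝ≥0∞) :
    ∫⁻ u in sector 3, fareyDensity u * g (F u)
      = ∫⁻ v in Iio (1 + √2), ENNReal.ofReal (branchDensity 3 v) * g v := by
  have hs : √2 ^ 2 = 2 := Real.sq_sqrt zero_le_two
  have h1 := Real.one_lt_sqrt_two
  have hsector : uIoo 0 (√2 - 1) = Ioo 0 (√2 - 1) := uIoo_of_lt (by linarith)
  rw [sector, ← setLIntegral_congr Ioo_ae_eq_Ioc, ← hsector]
  refine setLIntegral_hyperbolic (β := 1) (Q := 2 + 2 * √2) (by linarith) (by linarith)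
    (by linarith) (by linear_combination hs) (by linear_combination hs) one_ne_zero
    (fun u hu => ?_) g
  rw [hsector] at hu
  rw [F_eq_mob_of_mem_sector (Ioo_subset_Ioc_self hu) three_ne_zero]
  refine mob_eq_sub_div ?_ ?_ ?_ ?_ (sub_ne_zero.2 hu.1.ne') <;>
    simp [gam, nu, Matrix.mul_apply, Fin.sum_univ_two, Matrix.det_fin_two]

theorem setLIntegral_sector_four (g : ℝ → ℝ≥0∞) :
    ∫⁻ u in sector 4, fareyDensity u * g (F u)
      = ∫⁻ v in Iio (1 + √2), ENNReal.ofReal (branchDensity 4 v) * g v := by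
  have hs : √2 ^ 2 = 2 := Real.sq_sqrt zero_le_two
  have h1 := Real.one_lt_sqrt_two
  have hsector : uIoo 0 (1 - √2) = Ioo (1 - √2) 0 := uIoo_of_gt (by linarith)
  rw [sector, ← setLIntegral_congr Ioo_ae_eq_Ioc, ← hsector]
  refine setLIntegral_hyperbolic (β := -1) (Q := 2 + 2 * √2) (by linarith) (by linarith)
    (by linarith) (by linear_combination -hs) (by linear_combination -hs) (by norm_num)
    (fun u hu => ?_) g
  rw [hsector] at hu
  rw [F_eq_mob_of_mem_sector (Ioo_subset_Ioc_self hu) four_ne_zero]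
  refine mob_eq_sub_div ?_ ?_ ?_ ?_ (sub_ne_zero.2 hu.2.ne) <;>
    simp [gam, nu, Matrix.mul_apply, Fin.sum_univ_two, Matrix.det_fin_two]

theorem setLIntegral_sector_five (g : ℝ → ℝ≥0∞) :
    ∫⁻ u in sector 5, fareyDensity u * g (F u)
      = ∫⁻ v in Iio (1 + √2), ENNReal.ofReal (branchDensity 5 v) * g v := by
  have hs : √2 ^ 2 = 2 := Real.sq_sqrt zero_le_two
  have h1 := Real.one_lt_sqrt_two
  have h2 := Real.sqrt_two_lt_three_halves
  have hsector : uIoo (-1) (1 - √2) = Ioo (-1) (1 - √2) := uIoo_of_lt (by linarith)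
  rw [sector, ← setLIntegral_congr Ioo_ae_eq_Ioc, ← hsector]
  refine setLIntegral_hyperbolic (β := 2) (Q := 3 + 2 * √2) (by linarith) (by linarith)
    (by linarith) (by linear_combination -hs) (by linear_combination -hs) two_ne_zero
    (fun u hu => ?_) g
  rw [hsector] at hu
  rw [F_eq_mob_of_mem_sector (i := 5) (Ioo_subset_Ioc_self hu) (by norm_num)]
  refine mob_eq_sub_div ?_ ?_ ?_ ?_ (sub_ne_zero.2 hu.1.ne') <;>
    simp [gam, nu, Matrix.mul_apply, Fin.sum_univ_two, Matrix.det_fin_two] <;>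
    ring_nf
  simp [hs]

theorem setLIntegral_sector_six (g : ℝ → ℝ≥0∞) :
    ∫⁻ u in sector 6, fareyDensity u * g (F u)
      = ∫⁻ v in Iio (1 + √2), ENNReal.ofReal (branchDensity 6 v) * g v := by
  have hs : √2 ^ 2 = 2 := Real.sq_sqrt zero_le_two
  have h1 := Real.one_lt_sqrt_two
  have hsector : uIoo (-1) (-(1 + √2)) = Ioo (-(1 + √2)) (-1) := uIoo_of_gt (by linarith)
  rw [sector, ← setLIntegral_congr Ioo_ae_eq_Ioc, ← hsector]
  refine setLIntegral_hyperbolic (β := -2) (Q := 1 + 2 * √2) (by linarith) (by linarith)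
    (by linarith) (by linear_combination -hs) (by linear_combination hs) (by norm_num)
    (fun u hu => ?_) g
  rw [hsector] at hu
  rw [F_eq_mob_of_mem_sector (i := 6) (Ioo_subset_Ioc_self hu) (by norm_num)]
  refine mob_eq_sub_div ?_ ?_ ?_ ?_ (sub_ne_zero.2 hu.2.ne) <;>
    simp [gam, nu, Matrix.mul_apply, Fin.sum_univ_two, Matrix.det_fin_two] <;>
    ring_nf
  simp [hs]

theorem setLIntegral_sector_seven (g : ℝ → ℝ≥0∞) :
    ∫⁻ u in sector 7, fareyDensity u * g (F u)
      = ∫⁻ v in Iio (1 + √2), ENNReal.ofReal (branchDensity 7 v) * g v := by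
  have himage : (fun v => v - (2 + 2 * √2)) '' Iio (1 + √2) = Iio (-(1 + √2)) := by
    rw [image_sub_const_Iio]; ring_nf
  have hinv : LeftInvOn F (fun v => v - (2 + 2 * √2)) (Iio (1 + √2)) := fun v hv => by
    have hmem : v - (2 + 2 * √2) ∈ sector 7 := by
      simp only [sector, mem_Iic]; linarith [mem_Iio.1 hv]
    rw [F_eq_mob_of_mem_sector hmem (by norm_num)]
    simp [mob, gam, nu, Matrix.mul_apply, Fin.sum_univ_two]
  rw [sector, ← setLIntegral_congr Iio_ae_eq_Iic, ← himage,
    lintegral_image_mul_comp_of_leftInvOn (φ := fun v => v - (2 + 2 * √2)) (φ' := fun _ => 1)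
      measurableSet_Iio
      (fun v _ => ((hasDerivAt_id v).sub_const _).hasDerivWithinAt) hinv]
  refine setLIntegral_congr_fun measurableSet_Iio fun v _ => ?_
  rw [abs_one, ENNReal.ofReal_one, one_mul, branchDensity, fareyDensity]
  ring_nf

theorem setLIntegral_sector (i : ℕ) (g : ℝ → ℝ≥0∞) :
    ∫⁻ u in sector i, fareyDensity u * g (F u)
      = ∫⁻ v in Iio (1 + √2), ENNReal.ofReal (branchDensity i v) * g v := by
  rcases i with _ | _ | _ | _ | _ | _ | _ | _ | i
  · rw [sector, setLIntegral_congr_fun measurableSet_Ioi fun u hu => by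
      rw [fareyDensity_eq_zero (le_of_lt hu), zero_mul]]
    simp [branchDensity]
  · exact setLIntegral_sector_one g
  · exact setLIntegral_sector_two g
  · exact setLIntegral_sector_three g
  · exact setLIntegral_sector_four g
  · exact setLIntegral_sector_five g
  · exact setLIntegral_sector_six g
  · exact setLIntegral_sector_seven g
  · simp [sector, branchDensity]

theorem branchDensity_nonneg (i : ℕ) {v : ℝ} (hv : v < 1 + √2) : 0 ≤ branchDensity i v := by
  rcases i with _ | _ | _ | _ | _ | _ | _ | _ | i <;> simp only [branchDensity, abs_nonneg, le_rfl]
  exact inv_nonneg.2 (by linarith [Real.one_lt_sqrt_two])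

theorem measurable_branchDensity (i : ℕ) : Measurable (branchDensity i) := by
  rcases i with _ | _ | _ | _ | _ | _ | _ | _ | i <;>
    show Measurable fun v => branchDensity _ v <;> simp only [branchDensity] <;> fun_prop

theorem sum_branchDensity {v : ℝ} (hv : v < 1 + √2) :
    ∑ i ∈ Finset.range 8, branchDensity i v = (1 + √2 - v)⁻¹ := by
  have h1 := Real.one_lt_sqrt_two
  have h2 := Real.sqrt_two_lt_three_halves
  have habs : ∀ a b, v < a → a ≤ b → |(a - v)⁻¹ - (b - v)⁻¹| = (a - v)⁻¹ - (b - v)⁻¹ :=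
    fun a b ha hab => abs_of_nonneg (sub_nonneg.2 (inv_anti₀ (sub_pos.2 ha) (by linarith)))
  have habs' : ∀ a b, v < b → b ≤ a → |(a - v)⁻¹ - (b - v)⁻¹| = (b - v)⁻¹ - (a - v)⁻¹ :=
    fun a b hb hba => by rw [abs_sub_comm, habs b a hb hba]
  simp only [Finset.sum_range_succ, Finset.sum_range_zero, branchDensity]
  rw [habs (1 + √2) (1 + 2 * √2) hv (by linarith),
    habs' (3 + 3 * √2) (3 + 2 * √2) (by linarith) (by linarith),
    habs (3 + √2) (2 + 2 * √2) (by linarith) (by linarith),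
    habs' (1 + 3 * √2) (2 + 2 * √2) (by linarith) (by linarith),
    habs (1 + 3 * √2) (3 + 2 * √2) (by linarith) (by linarith),
    habs' (3 + √2) (1 + 2 * √2) (by linarith) (by linarith)]
  ring

theorem lintegral_comp_F {g : ℝ → ℝ≥0∞} (hg : Measurable g) :
    ∫⁻ u, g (F u) ∂fareyMeasure = ∫⁻ v, g v ∂fareyMeasure := by
  rw [fareyMeasure_eq_withDensity,
    lintegral_withDensity_eq_lintegral_mul _ measurable_fareyDensity (g := fun u => g (F u))
      (hg.comp measurable_F),
    lintegral_withDensity_eq_lintegral_mul _ measurable_fareyDensity hg]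
  calc ∫⁻ u, fareyDensity u * g (F u)
      = ∑ i ∈ Finset.range 8, ∫⁻ v in Iio (1 + √2), ENNReal.ofReal (branchDensity i v) * g v := by
        rw [lintegral_eq_sum_sector]
        exact Finset.sum_congr rfl fun i _ => setLIntegral_sector i g
    _ = ∫⁻ v in Iio (1 + √2), fareyDensity v * g v := by
        rw [← lintegral_finsetSum (f := fun i v => ENNReal.ofReal (branchDensity i v) * g v) _
          fun i _ => (ENNReal.measurable_ofReal.comp (measurable_branchDensity i)).mul hg]
        refine setLIntegral_congr_fun measurableSet_Iio fun v hv => ?_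
        rw [← Finset.sum_mul, ← ENNReal.ofReal_sum_of_nonneg fun i _ => branchDensity_nonneg i hv,
          sum_branchDensity hv, fareyDensity]
    _ = ∫⁻ v, fareyDensity v * g v := setLIntegral_eq_of_support_subset fun v hv =>
        mem_Iio.2 <| not_le.1 fun h => hv (by simp [fareyDensity_eq_zero h])

theorem map_F_fareyMeasure : fareyMeasure.map F = fareyMeasure :=
  Measure.ext_of_lintegral _ fun g hg => by rw [lintegral_map hg measurable_F, lintegral_comp_F hg]

/-- The measure with density `1/(1+√2-u)` is invariant under the octagon Farey map. -/
theorem fareyMeasure_invariant (A : Set ℝ) (hA : MeasurableSet A) :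
    fareyMeasure (F ⁻¹' A) = fareyMeasure A :=
  Measure.measure_preimage_of_map_eq_self map_F_fareyMeasure hA.nullMeasurableSet
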